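/- Let m be a nonnegative integer and N = 4(2m + 1)² + 1 be composite. Then there exists a positive integer u such that (8u + 3)² − N is a perfect square, the two numbers 8u + 3 ± √((8u+3)² − N) are proper factors of N whose product is N, and u satisfies the bounds N ≤ (8u + 3)² and 40u + 15 ≤ N. -/

import Mathlib

/-!
Every prime factor of `n ^ 2 + 1` is `≡ 1 (mod 4)`, since `-1` is a square modulo it; for even
`n` all divisors are odd, hence all are `≡ 1 (mod 4)`. With `N = 4 (2m+1)² + 1 ≡ 5 (mod 32)`,
a factorization `N = a b` with `1 < a ≤ b` then forces `a + b ≡ 6 (mod 16)`, i.e.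
`(a + b) / 2 = 8u + 3`, and Fermat's identity `((a+b)/2)² - N = ((b-a)/2)²` produces the
required `u` and `d = (b - a) / 2`. The bound `40u + 15 ≤ N` is `5 (a + b) / 2 ≤ a b`, which
holds because `5 ≤ a ≤ b`.
-/

theorem Nat.Prime.mod_four_eq_one_of_dvd_sq_add_one {p n : ℕ} (hp : p.Prime) (hodd : Odd p)
    (hdvd : p ∣ n ^ 2 + 1) : p % 4 = 1 := by
  have : Fact p.Prime := ⟨hp⟩
  have hneg_one : (n : ZMod p) ^ 2 = -1 := by
    rw [eq_neg_iff_add_eq_zero]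
    exact_mod_cast (ZMod.natCast_eq_zero_iff _ _).mpr hdvd
  have hne_three : p % 4 ≠ 3 := ZMod.mod_four_ne_three_of_sq_eq_neg_one hneg_one
  have := Nat.odd_iff.mp hodd
  omega

theorem Nat.mod_four_eq_one_of_odd_of_dvd_sq_add_one {k n : ℕ} (hodd : Odd k)
    (hdvd : k ∣ n ^ 2 + 1) : k % 4 = 1 := by
  induction k using Nat.recOnMul with
  | zero => exact absurd (Nat.eq_zero_of_zero_dvd hdvd) (Nat.succ_ne_zero _)
  | one => rfl
  | prime p hp => exact hp.mod_four_eq_one_of_dvd_sq_add_one hodd hdvd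
  | mul a b iha ihb =>
    obtain ⟨ha, hb⟩ := Nat.odd_mul.mp hodd
    rw [Nat.mul_mod, iha ha (dvd_of_mul_right_dvd hdvd), ihb hb (dvd_of_mul_left_dvd hdvd)]

theorem add_mod_sixteen_of_mul_mod_thirtytwo {a b : ℕ} (ha : a % 4 = 1) (hb : b % 4 = 1)
    (hab : a * b % 32 = 5) : (a + b) % 16 = 6 := by
  obtain ⟨x, rfl⟩ : ∃ x, a = 4 * x + 1 := ⟨a / 4, by omega⟩
  obtain ⟨y, rfl⟩ : ∃ y, b = 4 * y + 1 := ⟨b / 4, by omega⟩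
  have hexpand : (4 * x + 1) * (4 * y + 1) = 16 * (x * y) + 4 * (x + y) + 1 := by ring
  -- `ab ≡ 5 (mod 32)` makes `x + y` odd, so `xy` is even and then `x + y ≡ 1 (mod 8)`.
  have hxy_even : Even (x * y) := by
    rw [Nat.even_mul]
    by_contra! h
    rw [Nat.not_even_iff_odd, Nat.not_even_iff_odd] at h
    have := (h.1.add_odd h.2).two_dvd
    omega
  obtain ⟨t, ht⟩ := hxy_even
  omega

theorem exists_eight_mul_add_three_sq_eq_add_sq {N a b : ℕ} (hab : a * b = N) (ha1 : 1 < a)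
    (hle : a ≤ b) (ha : a % 4 = 1) (hb : b % 4 = 1) (hN : N % 32 = 5) :
    ∃ u : ℕ, 0 < u ∧ ∃ d : ℕ, (8 * u + 3) ^ 2 = N + d ^ 2 ∧
      N = (8 * u + 3 + d) * (8 * u + 3 - d) ∧
      ((8 * u + 3 + d) ∣ N ∧ 1 < 8 * u + 3 + d ∧ 8 * u + 3 + d < N) ∧
      ((8 * u + 3 - d) ∣ N ∧ 1 < 8 * u + 3 - d ∧ 8 * u + 3 - d < N) ∧
      N ≤ (8 * u + 3) ^ 2 ∧ 40 * u + 15 ≤ N := by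
  have hsum : (a + b) % 16 = 6 := add_mod_sixteen_of_mul_mod_thirtytwo ha hb (hab ▸ hN)
  obtain ⟨d, rfl⟩ : ∃ d, b = a + 2 * d := ⟨(b - a) / 2, by omega⟩
  obtain ⟨u, hu⟩ : ∃ u, a + d = 8 * u + 3 := ⟨(a + d - 3) / 8, by omega⟩
  have hplus : 8 * u + 3 + d = a + 2 * d := by omega
  have hminus : 8 * u + 3 - d = a := by omega
  have hb_lt : a + 2 * d < N := by nlinarith
  have hfive : 5 * (a + 2 * d) ≤ a * (a + 2 * d) := Nat.mul_le_mul_right _ (by omega)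
  refine ⟨u, by omega, d, ?_, ?_, ?_, ?_, ?_, by omega⟩
  · rw [← hu, ← hab]; ring
  · rw [hplus, hminus, ← hab, mul_comm]
  · rw [hplus]; exact ⟨⟨a, by rw [← hab, mul_comm]⟩, by omega, hb_lt⟩
  · rw [hminus]; exact ⟨⟨_, hab.symm⟩, ha1, by omega⟩
  · rw [← hu, ← hab]; nlinarith

theorem stmt_9 (m : ℕ) (N : ℕ) (hN : N = 4 * (2 * m + 1) ^ 2 + 1)
    (hcomp : ¬ N.Prime) :
    ∃ u : ℕ, 0 < u ∧ ∃ d : ℕ, (8 * u + 3) ^ 2 = N + d ^ 2 ∧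
      N = (8 * u + 3 + d) * (8 * u + 3 - d) ∧
      ((8 * u + 3 + d) ∣ N ∧ 1 < 8 * u + 3 + d ∧ 8 * u + 3 + d < N) ∧
      ((8 * u + 3 - d) ∣ N ∧ 1 < 8 * u + 3 - d ∧ 8 * u + 3 - d < N) ∧
      N ≤ (8 * u + 3) ^ 2 ∧ 40 * u + 15 ≤ N := by
  have hN_sq : N = (2 * (2 * m + 1)) ^ 2 + 1 := by rw [hN]; ring
  have hN_odd : Odd N := ⟨2 * (2 * m + 1) ^ 2, by rw [hN]; ring⟩
  have hdiv : ∀ k, k ∣ N → k % 4 = 1 := fun k hk =>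
    Nat.mod_four_eq_one_of_odd_of_dvd_sq_add_one (hN_odd.of_dvd_nat hk) (hN_sq ▸ hk)
  have hN32 : N % 32 = 5 := by
    obtain ⟨e, he⟩ := Nat.even_mul_succ_self m
    have : (2 * m + 1) ^ 2 = 8 * e + 1 := by rw [← two_mul] at he; nlinarith
    omega
  obtain ⟨a, ⟨b, hab⟩, ha1, ha_lt⟩ := Nat.exists_dvd_of_not_prime2 (by omega) hcomp
  have hb1 : 1 < b := by by_contra! hb; interval_cases b <;> omega
  have haN : a ∣ N := ⟨b, hab⟩
  have hbN : b ∣ N := ⟨a, hab.trans (mul_comm a b)⟩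
  rcases le_total a b with hle | hle
  · exact exists_eight_mul_add_three_sq_eq_add_sq hab.symm ha1 hle (hdiv a haN) (hdiv b hbN) hN32
  · exact exists_eight_mul_add_three_sq_eq_add_sq (hab.trans (mul_comm a b)).symm hb1 hle
      (hdiv b hbN) (hdiv a haN) hN32
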